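/- Let M be a deterministic single-tape Turing machine that halts within τ(N) steps on every input of length at most N, and let f(x) ∈ {accept, reject} be its output on input x. Then there is a chain of thought g over a countable alphabet Ξ (recording at each step the head's tape position, the action taken, and the new state), expressible in UHAT, such that for every input x, g(x) ends in f(x) and |g(x)| = O(τ(|x|)). -/

import Mathlib

open Matrix Filter

/-- A unique-hard-attention (UHAT) transformer over vocabulary type `V`. -/
structure UHAT (V : Type*) where
  /-- width -/
  d : ℕ
  /-- maximal context size -/
  nmax : ℕ
  /-- number of layers -/
  L : ℕ
  /-- number of heads per layer -/
  H : ℕ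
  /-- the (finite) vocabulary -/
  vocab : Finset V
  /-- token embeddings -/
  embed : V → Fin d → ℝ
  /-- positional encodings -/
  pos : ℕ → Fin d → ℝ
  /-- key matrices (layer, head) -/
  Kmat : ℕ → ℕ → Matrix (Fin d) (Fin d) ℝ
  /-- query matrices (layer, head) -/
  Qmat : ℕ → ℕ → Matrix (Fin d) (Fin d) ℝ
  /-- value matrices (layer, head) -/
  Vmat : ℕ → ℕ → Matrix (Fin d) (Fin d) ℝ
  /-- (arbitrary) MLP maps, one for each layer -/
  mlp : ℕ → (Fin d → ℝ) → Fin d → ℝ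
  /-- output matrix, one row per vocabulary item -/
  outm : V → Fin d → ℝ

open Classical in
/-- The smallest `j ≤ i` maximizing `f j` (unique hard attention with leftmost
tie-breaking and causal masking). -/
noncomputable def argmaxLeft {n : ℕ} (i : Fin n) (f : Fin n → ℝ) : Fin n :=
  ((Finset.Iic i).filter fun j => ∀ j' ∈ Finset.Iic i, f j' ≤ f j).min'
    (by
      obtain ⟨b, hb, hmax⟩ :=
        (Finset.Iic i).exists_max_image f ⟨i, Finset.mem_Iic.mpr le_rfl⟩
      exact ⟨b, Finset.mem_filter.mpr ⟨hb, hmax⟩⟩)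

/-- Activations `y_i^{(k)}` of a UHAT transformer on the input string `w`. -/
noncomputable def UHAT.act {V : Type*} (T : UHAT V) {n : ℕ} (w : Fin n → V) :
    ℕ → Fin n → Fin T.d → ℝ
  | 0, i => fun t => T.embed (w i) t + T.pos i.val t
  | k + 1, i =>
      T.mlp k (T.act w k i +
        ∑ h ∈ Finset.range T.H,
          (T.Vmat k h).mulVec
            (T.act w k (argmaxLeft i fun j =>
              (T.Kmat k h).mulVec (T.act w k j) ⬝ᵥ (T.Qmat k h).mulVec (T.act w k i))))

/-- The output of the transformer at (0-indexed) position `i` of the string `w`: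
a score for each vocabulary item. -/
noncomputable def UHAT.output {V : Type*} (T : UHAT V) (w : List V) (i : ℕ) : V → ℝ :=
  if h : i < w.length then fun v => T.outm v ⬝ᵥ T.act w.get T.L ⟨i, h⟩ else 0

open Classical in
/-- One-hot vector over the vocabulary. -/
noncomputable def oneHot {V : Type*} (v : V) : V → ℝ := fun u => if u = v then 1 else 0

/-- `T` computes the chain of thought `y` on input `w`: all symbols of `w ++ y` are in the
vocabulary, the string fits into the context window, and for each `i = 1, …, |y|`, the
output at (1-indexed) position `|w| + i - 1` is the one-hot vector of `yᵢ`. -/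
def UHAT.Computes {V : Type*} (T : UHAT V) (w y : List V) : Prop :=
  (∀ v ∈ w ++ y, v ∈ T.vocab) ∧ (w ++ y).length ≤ T.nmax ∧
    ∀ i : Fin y.length, T.output (w ++ y) (w.length + i.val - 1) = oneHot (y.get i)

/-- The chain of thought `g` (with input symbols included into the CoT alphabet via `ι`)
is expressible in UHAT: there are uniform bounds `L`, `H` on layers and heads such that for
every total length `n` some UHAT transformer computes `g` on all inputs of total length `n`. -/
def ExpressibleUHAT {S V : Type*} (ι : S → V) (g : List S → List V) : Prop :=
  ∃ L H : ℕ, ∀ n : ℕ, ∃ T : UHAT V, T.L ≤ L ∧ T.H ≤ H ∧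
    ∀ x : List S, (x.map ι ++ g x).length = n → T.Computes (x.map ι) (g x)

/-- Worst-case CoT length over inputs of length `N`. -/
noncomputable def maxCoTLen {S V : Type*} [Fintype S] (g : List S → List V) (N : ℕ) : ℕ :=
  Finset.univ.sup fun x : Fin N → S => (g (List.ofFn x)).length

/-- `x` is consistent with the restriction `ρ` (`none` plays the role of `*`). -/
def ConsistentWith {S : Type*} {N : ℕ} (ρ : Fin N → Option S) (x : Fin N → S) : Prop :=
  ∀ i : Fin N, ∀ s : S, ρ i = some s → x i = s

/-- Parity of a bit string: `true` iff the number of `1`s is odd. -/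
def parity (x : List Bool) : Bool := decide (x.count true % 2 = 1)

/-- Actions of a single-tape Turing machine: move left, move right, or write a symbol. -/
inductive TMAct (Γ : Type*) : Type _
  | left : TMAct Γ
  | right : TMAct Γ
  | write (σ : Γ) : TMAct Γ

/-- A deterministic single-tape Turing machine with tape alphabet `Γ` and state set `Q`. -/
structure TuringMachine (Γ Q : Type*) where
  /-- the blank symbol -/
  blank : Γ
  /-- the start state -/
  start : Q
  /-- the terminating set -/
  halt : Q → Bool
  /-- whether a (final) state indicates acceptance -/
  accept : Q → Bool
  /-- the transition function -/
  trans : Γ → Q → TMAct Γ × Q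

/-- A configuration: tape contents (positions `0, 1, 2, …`), head position, state. -/
structure TMCfg (Γ Q : Type*) where
  tape : ℕ → Γ
  pos : ℕ
  state : Q

/-- One computation step. -/
def TuringMachine.stepCfg {Γ Q : Type*} (M : TuringMachine Γ Q) (c : TMCfg Γ Q) :
    TMCfg Γ Q :=
  match M.trans (c.tape c.pos) c.state with
  | (TMAct.left, q) => ⟨c.tape, c.pos - 1, q⟩
  | (TMAct.right, q) => ⟨c.tape, c.pos + 1, q⟩
  | (TMAct.write σ, q) => ⟨fun i => if i = c.pos then σ else c.tape i, c.pos, q⟩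

/-- The configuration after `k` steps on input `x` (input written at positions
`0, …, |x|-1`, blanks elsewhere, head at position 0, start state). -/
def TuringMachine.cfgAt {Γ Q : Type*} (M : TuringMachine Γ Q) (x : List Γ) (k : ℕ) :
    TMCfg Γ Q :=
  M.stepCfg^[k] ⟨fun i => x.getD i M.blank, 0, M.start⟩

/-!
Each symbol of the chain of thought after the input is a finite snapshot of the machine: head
position, state, and the list of all writes so far. The next snapshot is determined by the current
one together with the input symbol under the head, and the context position equal to the head
position holds that symbol (or, past the input, a chain symbol read as a blank). One
hard-attention head with score `-(j - head)²` fetches it, and the arbitrary MLP performs the step.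
The chain stops at the halting time with the answer, so its length is at most `τ(|x|) + 2`.
-/

lemma argmaxLeft_eq_of_lt {N : ℕ} {i j₀ : Fin N} {f : Fin N → ℝ} (hj₀ : j₀ ≤ i)
    (hlt : ∀ j ≤ i, j ≠ j₀ → f j < f j₀) : argmaxLeft i f = j₀ := by
  have hmax : ∀ j ≤ i, f j ≤ f j₀ := fun j hj => by
    rcases eq_or_ne j j₀ with rfl | hne
    exacts [le_rfl, (hlt j hj hne).le]
  refine le_antisymm (Finset.min'_le _ _ ?_) (Finset.le_min' _ _ _ fun j hj => ?_)
  · simpa [Finset.mem_filter] using ⟨hj₀, hmax⟩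
  · simp only [Finset.mem_filter, Finset.mem_Iic] at hj
    by_contra! hjj₀
    exact (hj.2 j₀ hj₀).not_gt (hlt j hj.1 hjj₀.ne)

section LookupUHAT

variable {V : Type*}

def coord (m k : ℕ) (hk : k < 7 := by decide) : Fin (m + 7) := ⟨k, by omega⟩

def posFeature (j : ℕ) : ℕ → ℝ
  | 0 => 1
  | 1 => j
  | 2 => (j : ℝ) ^ 2
  | _ => 0

def tokenFeature (code ptr : V → ℕ) (v : V) : ℕ → ℝ
  | 3 => code v
  | 4 => ptr v
  | 5 => (ptr v : ℝ) ^ 2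
  | _ => 0

def outVec (m : ℕ) (code : V → ℕ) (v : V) (t : Fin (m + 7)) : ℝ :=
  if t.val = code v + 7 then 1 else 0

lemma outVec_dotProduct_outVec (m : ℕ) {code : V → ℕ} (hcode : Function.Injective code) {u : V}
    (hu : code u < m) (v : V) :
    outVec m code v ⬝ᵥ outVec m code u = oneHot u v := by
  have hsingle : outVec m code u = Pi.single ⟨code u + 7, by omega⟩ 1 := by
    ext t
    simp [outVec, Pi.single_apply, Fin.ext_iff]
  rw [hsingle, dotProduct_single, mul_one, outVec]
  by_cases hvu : v = u
  · simp [oneHot, hvu]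
  · simp [oneHot, hvu, hcode.ne (Ne.symm hvu)]

def queryMat (m : ℕ) : Matrix (Fin (m + 7)) (Fin (m + 7)) ℝ :=
  Matrix.single (coord m 0) (coord m 5) (-1) + Matrix.single (coord m 1) (coord m 4) 2 +
    Matrix.single (coord m 2) (coord m 0) (-1)

lemma one_mulVec_dotProduct_queryMat_mulVec (m : ℕ) (y z : Fin (m + 7) → ℝ) :
    (1 : Matrix (Fin (m + 7)) (Fin (m + 7)) ℝ) *ᵥ y ⬝ᵥ queryMat m *ᵥ z =
      -(y (coord m 0) * z (coord m 5)) + y (coord m 1) * (2 * z (coord m 4)) -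
        y (coord m 2) * z (coord m 0) := by
  simp only [Matrix.one_mulVec, queryMat, Matrix.add_mulVec, Matrix.single_mulVec_eq,
    dotProduct_add, dotProduct_smul, dotProduct_single, smul_eq_mul]
  ring

def copyMat (m : ℕ) : Matrix (Fin (m + 7)) (Fin (m + 7)) ℝ :=
  Matrix.single (coord m 6) (coord m 3) 1

lemma add_copyMat_mulVec_apply (m : ℕ) (y z : Fin (m + 7) → ℝ) :
    (y + copyMat m *ᵥ z) (coord m 3) = y (coord m 3) ∧
      (y + copyMat m *ᵥ z) (coord m 6) = y (coord m 6) + z (coord m 3) := by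
  simp [copyMat, Matrix.single_mulVec_eq, coord]

/-- At position `j`, coordinates `0, 1, 2` hold `1, j, j²` and coordinates `3, 4, 5` the code,
pointer and squared pointer of the symbol; the value matrix copies the code of the attended symbol
into coordinate `6`, and coordinate `code v + 7` is the one-hot output slot of `v`. -/
noncomputable def lookupUHAT (code ptr : V → ℕ) (next : V → V → V) (S : Finset V) (n m : ℕ) :
    UHAT V where
  d := m + 7
  nmax := n
  L := 1
  H := 1
  vocab := S
  embed v t := tokenFeature code ptr v t
  pos j t := posFeature j t
  Kmat _ _ := 1
  Qmat _ _ := queryMat m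
  Vmat _ _ := copyMat m
  mlp _ z := Function.extend (fun p : V × V => ((code p.1 : ℝ), (code p.2 : ℝ)))
    (fun p => outVec m code (next p.1 p.2)) 0 (z (coord m 3), z (coord m 6))
  outm := outVec m code

variable (code ptr : V → ℕ) (next : V → V → V) (S : Finset V) (n m : ℕ)

lemma lookupUHAT_act_zero {N : ℕ} (w : Fin N → V) (i : Fin N) (t : Fin (m + 7)) :
    (lookupUHAT code ptr next S n m).act w 0 i t = tokenFeature code ptr (w i) t + posFeature i t :=
  rfl

lemma lookupUHAT_score {N : ℕ} (w : Fin N → V) (i j : Fin N) :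
    (lookupUHAT code ptr next S n m).Kmat 0 0 *ᵥ (lookupUHAT code ptr next S n m).act w 0 j ⬝ᵥ
      (lookupUHAT code ptr next S n m).Qmat 0 0 *ᵥ (lookupUHAT code ptr next S n m).act w 0 i =
      -((j : ℝ) - ptr (w i)) ^ 2 := by
  refine (one_mulVec_dotProduct_queryMat_mulVec m _ _).trans ?_
  simp only [lookupUHAT_act_zero, coord, tokenFeature, posFeature]
  ring

lemma lookupUHAT_attention {N : ℕ} (w : Fin N → V) {i j : Fin N} (hj : (j : ℕ) = ptr (w i))
    (hji : j ≤ i) :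
    argmaxLeft i (fun j' => (lookupUHAT code ptr next S n m).Kmat 0 0 *ᵥ
      (lookupUHAT code ptr next S n m).act w 0 j' ⬝ᵥ
        (lookupUHAT code ptr next S n m).Qmat 0 0 *ᵥ (lookupUHAT code ptr next S n m).act w 0 i) =
      j := by
  refine argmaxLeft_eq_of_lt hji fun j' _ hne => ?_
  have hne' : (j' : ℝ) - j ≠ 0 := sub_ne_zero.mpr (by exact_mod_cast Fin.val_ne_of_ne hne)
  simp only [lookupUHAT_score, ← hj, sub_self]
  nlinarith [sq_pos_of_ne_zero hne']

lemma lookupUHAT_act_one (hcode : Function.Injective code) {N : ℕ} (w : Fin N → V) {i j : Fin N}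
    (hj : (j : ℕ) = ptr (w i)) (hji : j ≤ i) :
    (lookupUHAT code ptr next S n m).act w 1 i = outVec m code (next (w i) (w j)) := by
  have hpair : Function.Injective fun p : V × V => ((code p.1 : ℝ), (code p.2 : ℝ)) :=
    fun p q h => Prod.ext (hcode (Nat.cast_injective (congrArg Prod.fst h)))
      (hcode (Nat.cast_injective (congrArg Prod.snd h)))
  rw [UHAT.act, show (lookupUHAT code ptr next S n m).H = 1 from rfl, Finset.sum_range_one,
    lookupUHAT_attention code ptr next S n m w hj hji]
  obtain ⟨h3, h6⟩ := add_copyMat_mulVec_apply m ((lookupUHAT code ptr next S n m).act w 0 i)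
    ((lookupUHAT code ptr next S n m).act w 0 j)
  simp only [lookupUHAT_act_zero, tokenFeature, posFeature, coord, add_zero, zero_add] at h3 h6
  have hargs : (_, _) = ((code (w i) : ℝ), (code (w j) : ℝ)) := Prod.ext h3 h6
  exact (congrArg (Function.extend (fun p : V × V => ((code p.1 : ℝ), (code p.2 : ℝ)))
    (fun p => outVec m code (next p.1 p.2)) 0) hargs).trans (hpair.extend_apply _ _ (w i, w j))

lemma lookupUHAT_output (hcode : Function.Injective code) {w : List V} {p : ℕ} {a b : V}
    (ha : w[p]? = some a) (hle : ptr a ≤ p) (hb : w[ptr a]? = some b) (hm : code (next a b) < m) :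
    (lookupUHAT code ptr next S n m).output w p = oneHot (next a b) := by
  obtain ⟨hp, rfl⟩ := List.getElem?_eq_some_iff.mp ha
  obtain ⟨hj, rfl⟩ := List.getElem?_eq_some_iff.mp hb
  rw [UHAT.output, dif_pos hp]
  ext v
  rw [show (lookupUHAT code ptr next S n m).L = 1 from rfl,
    lookupUHAT_act_one code ptr next S n m hcode w.get (j := ⟨ptr w[p], hj⟩) rfl hle]
  exact outVec_dotProduct_outVec m hcode hm v

end LookupUHAT

/-- `UHAT.Computes` asks for `(g x)[i]` at position `|x| + i - 1` of `x ++ g x`. -/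
def IsLookupCoT {S V : Type*} (ι : S → V) (g : List S → List V) (ptr : V → ℕ)
    (next : V → V → V) : Prop :=
  ∀ x : List S, ∀ i < (g x).length, ∃ a b : V,
    (x.map ι ++ g x)[x.length + i - 1]? = some a ∧ ptr a ≤ x.length + i - 1 ∧
      (x.map ι ++ g x)[ptr a]? = some b ∧ (g x)[i]? = some (next a b)

theorem IsLookupCoT.map_equiv {S V W : Type*} {ι : S → V} {g : List S → List V} {ptr : V → ℕ}
    {next : V → V → V} (h : IsLookupCoT ι g ptr next) (e : V ≃ W) :
    IsLookupCoT (e ∘ ι) (fun x => (g x).map e) (ptr ∘ e.symm)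
      (fun a b => e (next (e.symm a) (e.symm b))) := by
  intro x i hi
  rw [List.length_map] at hi
  obtain ⟨a, b, ha, hle, hb, hg⟩ := h x i hi
  have hw : x.map (e ∘ ι) ++ (g x).map e = (x.map ι ++ g x).map e := by simp
  refine ⟨e a, e b, ?_⟩
  simp only [hw, List.getElem?_map, Function.comp_apply, Equiv.symm_apply_apply]
  simp [ha, hb, hg, hle]

theorem ExpressibleUHAT.of_isLookupCoT {S V : Type*} [Finite S] [Countable V] {ι : S → V}
    {g : List S → List V} {ptr : V → ℕ} {next : V → V → V} (h : IsLookupCoT ι g ptr next) :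
    ExpressibleUHAT ι g := by
  obtain ⟨code, hcode⟩ := Countable.exists_injective_nat V
  refine ⟨1, 1, fun n => ?_⟩
  have hvocab : {v | ∃ x : List S, (x.map ι ++ g x).length = n ∧ v ∈ x.map ι ++ g x}.Finite := by
    refine ((List.finite_length_le S n).biUnion fun x _ => (x.map ι ++ g x).finite_toSet).subset ?_
    rintro v ⟨x, hx, hv⟩
    exact Set.mem_biUnion (x := x) (by simp at hx ⊢; omega) hv
  set vocab := hvocab.toFinset
  refine ⟨lookupUHAT code ptr next vocab n (vocab.sup code + 1), le_rfl, le_rfl, fun x hx =>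
    ⟨fun v hv => hvocab.mem_toFinset.mpr ⟨x, hx, hv⟩, hx.le, fun i => ?_⟩⟩
  obtain ⟨a, b, ha, hle, hb, hgi⟩ := h x i i.isLt
  have hnext : next a b ∈ vocab :=
    hvocab.mem_toFinset.mpr ⟨x, hx, List.mem_append_right _ (List.mem_of_getElem? hgi)⟩
  rw [List.length_map, List.get_eq_getElem, (List.getElem?_eq_some_iff.mp hgi).2]
  exact lookupUHAT_output code ptr next vocab n _ hcode ha hle hb
    (Nat.lt_succ_of_le (Finset.le_sup hnext))

lemma elim_of_getElem?_map_inl_append {α β : Type*} (d : α) (x : List α) {ys : List (α ⊕ β)}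
    (hys : ∀ y ∈ ys, y.isRight) {j : ℕ} {b : α ⊕ β} (hb : (x.map Sum.inl ++ ys)[j]? = some b) :
    b.elim id (fun _ => d) = x.getD j d := by
  rcases lt_or_ge j x.length with hj | hj
  · rw [List.getElem?_append_left (by simpa using hj)] at hb
    obtain ⟨-, rfl⟩ := List.getElem?_eq_some_iff.mp hb
    simp [hj]
  · rw [List.getElem?_append_right (by simpa using hj)] at hb
    obtain ⟨b, rfl⟩ := Sum.isRight_iff.mp (hys b (List.mem_of_getElem? hb))
    simp [hj]

/-- A configuration in finite form: the tape is the input overlaid with `writes`, the list of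
all writes performed so far, most recent first. -/
structure TMSnapshot (Γ Q : Type*) where
  head : ℕ
  state : Q
  writes : List (ℕ × Γ)

instance {Γ Q : Type*} [Countable Γ] [Countable Q] : Countable (TMSnapshot Γ Q) :=
  Function.Injective.countable (f := fun c : TMSnapshot Γ Q => (c.head, c.state, c.writes))
    fun ⟨_, _, _⟩ ⟨_, _, _⟩ h => by simpa using h

def TMSnapshot.toCfg {Γ Q : Type*} (base : ℕ → Γ) (c : TMSnapshot Γ Q) : TMCfg Γ Q :=
  ⟨fun i => (c.writes.lookup i).getD (base i), c.head, c.state⟩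

abbrev CoTSymbol (Γ Q : Type*) := Γ ⊕ Bool ⊕ TMSnapshot Γ Q

def cotPtr {Γ Q : Type*} : CoTSymbol Γ Q → ℕ
  | .inr (.inr c) => c.head
  | _ => 0

namespace TuringMachine

variable {Γ Q : Type*} (M : TuringMachine Γ Q)

lemma cfgAt_succ (x : List Γ) (k : ℕ) : M.cfgAt x (k + 1) = M.stepCfg (M.cfgAt x k) :=
  Function.iterate_succ_apply' _ _ _

lemma pos_stepCfg_le (c : TMCfg Γ Q) : (M.stepCfg c).pos ≤ c.pos + 1 := by
  unfold stepCfg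
  split <;> dsimp only <;> omega

lemma pos_cfgAt_le (x : List Γ) (k : ℕ) : (M.cfgAt x k).pos ≤ k := by
  induction k with
  | zero => rfl
  | succ k ih => exact (M.cfgAt_succ x k ▸ M.pos_stepCfg_le _).trans (by omega)

/-- `0` (as `sInf ∅`) if the machine never halts on `x`. -/
noncomputable def haltTime (x : List Γ) : ℕ := sInf {k | M.halt (M.cfgAt x k).state = true}

lemma halt_cfgAt_haltTime {x : List Γ} (h : ∃ k, M.halt (M.cfgAt x k).state = true) :
    M.halt (M.cfgAt x (M.haltTime x)).state = true :=
  Nat.sInf_mem h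

lemma halt_cfgAt_of_lt_haltTime {x : List Γ} {t : ℕ} (ht : t < M.haltTime x) :
    M.halt (M.cfgAt x t).state = false := by
  simpa using Nat.notMem_of_lt_sInf ht

lemma haltTime_le {x : List Γ} {k : ℕ} (hk : M.halt (M.cfgAt x k).state = true) :
    M.haltTime x ≤ k :=
  Nat.sInf_le hk

lemma haltTime_eq {x : List Γ} {k : ℕ} (hmin : ∀ k' < k, M.halt (M.cfgAt x k').state = false)
    (hk : M.halt (M.cfgAt x k).state = true) : M.haltTime x = k := by
  refine le_antisymm (M.haltTime_le hk) (not_lt.mp fun hlt => ?_)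
  simpa [hmin _ hlt] using M.halt_cfgAt_haltTime ⟨k, hk⟩

noncomputable def result (x : List Γ) : Bool := M.accept (M.cfgAt x (M.haltTime x)).state

def initSnapshot : TMSnapshot Γ Q := ⟨0, M.start, []⟩

/-- `a` is the input symbol under the head, read unless that cell has been overwritten. -/
def snapStep (a : Γ) (c : TMSnapshot Γ Q) : TMSnapshot Γ Q :=
  match M.trans ((c.writes.lookup c.head).getD a) c.state with
  | (TMAct.left, q) => ⟨c.head - 1, q, c.writes⟩
  | (TMAct.right, q) => ⟨c.head + 1, q, c.writes⟩
  | (TMAct.write σ, q) => ⟨c.head, q, (c.head, σ) :: c.writes⟩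

def snapAt (x : List Γ) : ℕ → TMSnapshot Γ Q
  | 0 => M.initSnapshot
  | t + 1 => M.snapStep (x.getD (snapAt x t).head M.blank) (snapAt x t)

lemma toCfg_snapStep (base : ℕ → Γ) (c : TMSnapshot Γ Q) :
    (M.snapStep (base c.head) c).toCfg base = M.stepCfg (c.toCfg base) := by
  unfold snapStep stepCfg TMSnapshot.toCfg
  rcases M.trans ((c.writes.lookup c.head).getD (base c.head)) c.state with ⟨_ | _ | σ, q⟩
  · rfl
  · rfl
  · simp only [TMCfg.mk.injEq, and_self, and_true]
    funext i
    by_cases hi : i = c.head <;> simp [List.lookup_cons, hi, beq_eq_false_iff_ne.mpr]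

lemma toCfg_snapAt (x : List Γ) (t : ℕ) :
    (M.snapAt x t).toCfg (x.getD · M.blank) = M.cfgAt x t := by
  induction t with
  | zero => simp [snapAt, initSnapshot, TMSnapshot.toCfg, cfgAt]
  | succ t ih => rw [cfgAt_succ, ← ih, ← toCfg_snapStep]; rfl

lemma head_snapAt (x : List Γ) (t : ℕ) : (M.snapAt x t).head = (M.cfgAt x t).pos := by
  rw [← toCfg_snapAt]; rfl

lemma state_snapAt (x : List Γ) (t : ℕ) : (M.snapAt x t).state = (M.cfgAt x t).state := by
  rw [← toCfg_snapAt]; rfl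

def cotNext : CoTSymbol Γ Q → CoTSymbol Γ Q → CoTSymbol Γ Q
  | .inl _, _ => .inr (.inr M.initSnapshot)
  | .inr (.inl b), _ => .inr (.inl b)
  | .inr (.inr c), a =>
    if M.halt c.state then .inr (.inl (M.accept c.state))
    else .inr (.inr (M.snapStep (a.elim id fun _ => M.blank) c))

/-- On the empty input the first symbol is predicted at position `0 + 0 - 1 = 0`, like the second
one, so the two must agree: that chain consists of copies of the answer. -/
noncomputable def cot (x : List Γ) : List (CoTSymbol Γ Q) :=
  if x = [] then List.replicate (M.haltTime x + 2) (.inr (.inl (M.result x)))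
  else (List.range (M.haltTime x + 1)).map (fun t => .inr (.inr (M.snapAt x t))) ++
    [.inr (.inl (M.result x))]

lemma length_cot (x : List Γ) : (M.cot x).length = M.haltTime x + 2 := by
  unfold cot
  split_ifs <;> simp

lemma suffix_cot (x : List Γ) : [.inr (.inl (M.result x))] <:+ M.cot x := by
  unfold cot
  split_ifs
  exacts [⟨_, (List.replicate_succ' ..).symm⟩, ⟨_, rfl⟩]

lemma isRight_of_mem_cot {x : List Γ} {y : CoTSymbol Γ Q} (hy : y ∈ M.cot x) : y.isRight := by
  unfold cot at hy
  split_ifs at hy <;> aesop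

lemma getElem?_cot_of_le {x : List Γ} (hx : x ≠ []) {t : ℕ} (ht : t ≤ M.haltTime x) :
    (M.cot x)[t]? = some (.inr (.inr (M.snapAt x t))) := by
  simp [cot, hx, List.getElem?_append_left, Nat.lt_succ_of_le ht]

lemma getElem?_cot_haltTime_succ {x : List Γ} (hx : x ≠ []) :
    (M.cot x)[M.haltTime x + 1]? = some (.inr (.inl (M.result x))) := by
  simp [cot, hx]

lemma cotNext_snapAt (x : List Γ) (t : ℕ) {b : CoTSymbol Γ Q}
    (hb : b.elim id (fun _ => M.blank) = x.getD (M.snapAt x t).head M.blank) :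
    M.cotNext (.inr (.inr (M.snapAt x t))) b =
      if M.halt (M.cfgAt x t).state then .inr (.inl (M.accept (M.cfgAt x t).state))
      else .inr (.inr (M.snapAt x (t + 1))) := by
  simp only [cotNext, state_snapAt, hb]
  rfl

theorem isLookupCoT_cot (hhalt : ∀ x : List Γ, ∃ k, M.halt (M.cfgAt x k).state = true) :
    IsLookupCoT Sum.inl M.cot cotPtr M.cotNext := by
  intro x i hi
  rw [length_cot] at hi
  by_cases hx : x = []
  · subst hx
    refine ⟨.inr (.inl (M.result [])), .inr (.inl (M.result [])), ?_⟩
    simp [cot, cotPtr, cotNext, hi, List.getElem?_replicate]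
    omega
  have hread {j : ℕ} {b : CoTSymbol Γ Q} (hb : (x.map Sum.inl ++ M.cot x)[j]? = some b) :=
    elim_of_getElem?_map_inl_append M.blank x (fun _ => M.isRight_of_mem_cot) hb
  have hcot (s : ℕ) : (x.map Sum.inl ++ M.cot x)[x.length + s]? = (M.cot x)[s]? := by
    simp [List.getElem?_append_right]
  have hxpos : 0 < x.length := List.length_pos_iff.mpr hx
  rcases i with _ | t
  · refine ⟨.inl x[x.length - 1], .inl x[0], ?_, by simp [cotPtr], ?_, ?_⟩
    · simp [List.getElem?_append_left, hxpos]
    · simp [cotPtr, hxpos]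
    · exact (M.getElem?_cot_of_le hx (Nat.zero_le _)).trans rfl
  · have ht : t ≤ M.haltTime x := by omega
    have hhead : (M.snapAt x t).head ≤ t := M.head_snapAt x t ▸ M.pos_cfgAt_le x t
    obtain ⟨b, hb⟩ : ∃ b, (x.map Sum.inl ++ M.cot x)[(M.snapAt x t).head]? = some b :=
      Option.isSome_iff_exists.mp (by simp [length_cot]; omega)
    refine ⟨.inr (.inr (M.snapAt x t)), b, ?_, by simp [cotPtr]; omega, hb, ?_⟩
    · rw [show x.length + (t + 1) - 1 = x.length + t by omega, hcot, M.getElem?_cot_of_le hx ht]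
    · rw [M.cotNext_snapAt x t (hread hb)]
      rcases ht.lt_or_eq with hlt | rfl
      · rw [M.halt_cfgAt_of_lt_haltTime hlt, if_neg Bool.false_ne_true]
        exact M.getElem?_cot_of_le hx hlt
      · rw [if_pos (M.halt_cfgAt_haltTime (hhalt x))]
        exact M.getElem?_cot_haltTime_succ hx

end TuringMachine

theorem turing_machine_cot_general {Γ Q : Type*} [Fintype Γ] [Fintype Q]
    (M : TuringMachine Γ Q) (τ : ℕ → ℕ)
    (hhalt : ∀ x : List Γ, ∃ k ≤ τ x.length, M.halt (M.cfgAt x k).state = true) :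
    ∃ (Ξ : Type) (_ : Countable Ξ) (ιΓ : Γ → Ξ) (ιB : Bool → Ξ),
      Function.Injective ιΓ ∧ Function.Injective ιB ∧
      ∃ g : List Γ → List Ξ, ExpressibleUHAT ιΓ g ∧
        (∀ (x : List Γ) (k : ℕ),
          (∀ k' < k, M.halt (M.cfgAt x k').state = false) →
          M.halt (M.cfgAt x k).state = true →
          [ιB (M.accept (M.cfgAt x k).state)] <:+ g x) ∧
        ∃ c : ℕ, 0 < c ∧ ∀ x : List Γ, (g x).length ≤ c * (τ x.length + 1) := by
  have : Small.{0} (CoTSymbol Γ Q) := Countable.toSmall _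
  let e := equivShrink (CoTSymbol Γ Q)
  have : Countable (Shrink (CoTSymbol Γ Q)) := Countable.of_equiv _ e
  refine ⟨Shrink (CoTSymbol Γ Q), inferInstance, e ∘ Sum.inl, e ∘ Sum.inr ∘ Sum.inl,
    e.injective.comp Sum.inl_injective, e.injective.comp (Sum.inr_injective.comp Sum.inl_injective),
    fun x => (M.cot x).map e, ?_, fun x k hmin hk => ?_, 2, two_pos, fun x => ?_⟩
  · have hcot := M.isLookupCoT_cot fun x => (hhalt x).imp fun _ => And.right
    exact .of_isLookupCoT (hcot.map_equiv e)
  · simpa [TuringMachine.result, M.haltTime_eq hmin hk] using List.IsSuffix.map e (M.suffix_cot x)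
  · obtain ⟨k, hkτ, hk⟩ := hhalt x
    have hle := M.haltTime_le hk
    rw [List.length_map, TuringMachine.length_cot]
    omega

/-- **Universality of UHAT CoTs.** Let `M` be a Turing machine halting within
`τ(|x|)` steps on every input `x`. Then there is a chain of thought `g` over a countable
alphabet, expressible in UHAT, that on every input `x` ends in the output of `M` on `x`
(accept/reject, encoded via `ιB`) and has length `O(τ(|x|))`. -/
theorem turing_machine_cot {Γ Q : Type*} [Fintype Γ] [Fintype Q] [DecidableEq Γ]
    (M : TuringMachine Γ Q) (τ : ℕ → ℕ)
    (hhalt : ∀ x : List Γ, ∃ k ≤ τ x.length, M.halt (M.cfgAt x k).state = true) :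
    ∃ (Ξ : Type) (_ : Countable Ξ) (ιΓ : Γ → Ξ) (ιB : Bool → Ξ),
      Function.Injective ιΓ ∧ Function.Injective ιB ∧
      ∃ g : List Γ → List Ξ, ExpressibleUHAT ιΓ g ∧
        (∀ (x : List Γ) (k : ℕ),
          (∀ k' < k, M.halt (M.cfgAt x k').state = false) →
          M.halt (M.cfgAt x k).state = true →
          [ιB (M.accept (M.cfgAt x k).state)] <:+ g x) ∧
        ∃ c : ℕ, 0 < c ∧ ∀ x : List Γ, (g x).length ≤ c * (τ x.length + 1) :=
  turing_machine_cot_general M τ hhalt
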